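/- For n ≥ 2, let G_n=(V_n,E_n) be the graph with V_n := {a_i : i ∈ [n]} ∪ {u_{i,j} : i ∈ [n−1], j ∈ [2]} and E_n := {{a_i, u_{i,j}} : i ∈ [n−1], j ∈ [2]} ∪ {{a_i, u_{i−1,j}} : i ∈ [n] ∖ {1}, j ∈ [2]}, and let A := {a_{2i} : i ∈ [⌊n/2⌋]}. Then the number of minimal connected Roman dominating functions g on G_n with V_2(g) = A satisfies |C_{𝒞ℛ𝒟ℱ,G_n}[A]| ≥ 2^{n/3}. -/

import Mathlib

open Set

variable {V : Type*}

/-- The set of vertices on which `f` takes value `i`. -/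
def Vlevel (f : V → ℕ) (i : ℕ) : Set V := {v | f v = i}

/-- Closed neighborhood of `v` inside the induced subgraph `G[W]`. -/
def closedNbhdIn (G : SimpleGraph V) (W : Set V) (v : V) : Set V :=
  {u ∈ W | u = v ∨ G.Adj u v}

/-- Closed neighborhood of a set `A` inside the induced subgraph `G[W]`. -/
def closedNbhdSetIn (G : SimpleGraph V) (W A : Set V) : Set V :=
  ⋃ u ∈ A, closedNbhdIn G W u

/-- Private neighborhood `P_{G[W],A}(v) = N[v] \ N[A \ {v}]` inside `G[W]`. -/
def privNbhd (G : SimpleGraph V) (W A : Set V) (v : V) : Set V :=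
  closedNbhdIn G W v \ closedNbhdSetIn G W (A \ {v})

/-- Closed neighborhood `N[v]` in `G`. -/
def closedNbhd (G : SimpleGraph V) (v : V) : Set V := {u | u = v ∨ G.Adj u v}

/-- Closed neighborhood `N[A]` of a set in `G`. -/
def closedNbhdSet (G : SimpleGraph V) (A : Set V) : Set V := ⋃ v ∈ A, closedNbhd G v

/-- Open neighborhood `N(A)` of a set in `G`. -/
def openNbhdSet (G : SimpleGraph V) (A : Set V) : Set V := ⋃ v ∈ A, G.neighborSet v

/-- Characteristic function of a set. -/
noncomputable def chi (S : Set V) : V → ℕ := S.indicator 1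

/-- Roman dominating function: values in {0,1,2}, and every vertex of value 0 has
a neighbor of value 2. -/
def IsRDF (G : SimpleGraph V) (f : V → ℕ) : Prop :=
  (∀ v, f v ≤ 2) ∧ ∀ v, f v = 0 → ∃ u, G.Adj v u ∧ f u = 2

/-- `f` is minimal with respect to the pointwise order among functions with property `P`. -/
def MinimalWrt (P : (V → ℕ) → Prop) (f : V → ℕ) : Prop :=
  P f ∧ ∀ g, P g → g ≤ f → g = f

/-- `C_{P,G}[A]`: minimal functions with property `P` whose set of vertices of value 2 is `A`. -/
def CSet (P : (V → ℕ) → Prop) (A : Set V) : Set (V → ℕ) :=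
  {f | MinimalWrt P f ∧ Vlevel f 2 = A}

/-- Nice Roman domination property. -/
def IsNiceRDP (G : SimpleGraph V) (P : (V → ℕ) → Prop) : Prop :=
  (∀ f, P f → IsRDF G f) ∧
  (∀ f, P f → ∀ v ∈ Vlevel f 0, P (f + chi {v})) ∧
  (∀ f, P f → ∀ v ∈ Vlevel f 2,
    (P (f - chi {v}) ↔ privNbhd G (Vlevel f 0 ∪ Vlevel f 2) (Vlevel f 2) v ⊆ {v}))

/-- Maximal Roman dominating function: an Rdf such that `V_0(f)` is not a dominating set. -/
def IsMRDF (G : SimpleGraph V) (f : V → ℕ) : Prop :=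
  IsRDF G f ∧ closedNbhdSet G (Vlevel f 0) ≠ Set.univ

/-- Total Roman dominating function: an Rdf such that `G[V_1(f) ∪ V_2(f)]` has no isolated
vertices. -/
def IsTRDF (G : SimpleGraph V) (f : V → ℕ) : Prop :=
  IsRDF G f ∧ ∀ v ∈ Vlevel f 1 ∪ Vlevel f 2, ∃ u ∈ Vlevel f 1 ∪ Vlevel f 2, G.Adj v u

/-- Connected Roman dominating function: an Rdf such that `G[V_1(f) ∪ V_2(f)]` is connected. -/
def IsCRDF (G : SimpleGraph V) (f : V → ℕ) : Prop :=
  IsRDF G f ∧ (G.induce (Vlevel f 1 ∪ Vlevel f 2)).Connected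

/-- Vertex set of `G_n`: `Sum.inl i = a_{i+1}` and `Sum.inr (k, j) = u_{k+1, j+1}`
(0-based indices). -/
abbrev GnVert (n : ℕ) := (Fin n) ⊕ ((Fin (n - 1)) × (Fin 2))

/-- One direction of the edges of `G_n`: `a_i` is adjacent to `u_{k,j}` iff
`i = k` or `i = k + 1` (0-based). -/
def GnRel (n : ℕ) : GnVert n → GnVert n → Prop
  | Sum.inl i, Sum.inr k => (i : ℕ) = (k.1 : ℕ) ∨ (i : ℕ) = (k.1 : ℕ) + 1
  | _, _ => False

/-- The graph `G_n`. -/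
def GnGraph (n : ℕ) : SimpleGraph (GnVert n) where
  Adj x y := GnRel n x y ∨ GnRel n y x
  symm := ⟨fun _ _ h => Or.symm h⟩
  loopless := ⟨by rintro (i | k) (h | h) <;> exact h⟩

/-- The set `A = {a_{2i} : i ∈ [⌊n/2⌋]}`, i.e. the vertices `a_i` with even 1-based
index (odd 0-based index). -/
def GnA (n : ℕ) : Set (GnVert n) :=
  {x | ∃ i : Fin n, x = Sum.inl i ∧ (i : ℕ) % 2 = 1}

/-!
For each choice `c` of one vertex `u_{k,c(k)}` in every pair `{u_{k,1}, u_{k,2}}`, the function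
that is `2` on `A`, `1` on the other `a_i` and on the chosen `u`'s, and `0` elsewhere, is a minimal
cRdf with `V_2 = A`. Below it, every `a_i` stays positive because all its neighbours have value at
most `1`; every `a_{2i}` keeps value `2`, being the only possible value-2 neighbour of the unchosen
`u_{2i-1,j}`; and every chosen `u` stays positive because `u_{k,1}, u_{k,2}` separate `a_k` from
`a_{k+1}`. Distinct choices give distinct functions, so there are at least `2^{n-1} ≥ 2^{n/3}`.
-/

theorem SimpleGraph.Reachable.eq_of_forall_adj_eq {V α : Type*} {G : SimpleGraph V}
    (φ : V → α) (hφ : ∀ a b, G.Adj a b → φ a = φ b) {x y : V} (h : G.Reachable x y) :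
    φ x = φ y := by
  obtain ⟨w⟩ := h
  induction w with
  | nil => rfl
  | cons hadj _ ih => exact (hφ _ _ hadj).trans ih

theorem mem_vlevel_one_union_two_iff {V : Type*} {f : V → ℕ} {v : V} (hv : f v ≤ 2) :
    v ∈ Vlevel f 1 ∪ Vlevel f 2 ↔ f v ≠ 0 := by
  simp only [Vlevel, Set.mem_union, Set.mem_ofPred_eq]
  omega

theorem CSet.finite_of_isRDF {V : Type*} [Finite V] {G : SimpleGraph V} {P : (V → ℕ) → Prop}
    (hP : ∀ f, P f → IsRDF G f) (A : Set V) : (CSet P A).Finite :=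
  (Set.Finite.pi fun _ => Set.finite_Iic 2).subset fun f hf =>
    Set.mem_univ_pi.2 (hP f hf.1.1).1

namespace GnGraph

variable {n : ℕ}

@[simp]
theorem adj_inl_inr_iff (i : Fin n) (k : Fin (n - 1)) (j : Fin 2) :
    (GnGraph n).Adj (.inl i) (.inr (k, j)) ↔ (i : ℕ) = k ∨ (i : ℕ) = k + 1 := by
  simp [GnGraph, GnRel]

@[simp]
theorem adj_inr_inl_iff (i : Fin n) (k : Fin (n - 1)) (j : Fin 2) :
    (GnGraph n).Adj (.inr (k, j)) (.inl i) ↔ (i : ℕ) = k ∨ (i : ℕ) = k + 1 := by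
  simp [GnGraph, GnRel]

@[simp]
theorem not_adj_inl_inl (i i' : Fin n) : ¬ (GnGraph n).Adj (.inl i) (.inl i') := by
  simp [GnGraph, GnRel]

@[simp]
theorem not_adj_inr_inr (x y : Fin (n - 1) × Fin 2) :
    ¬ (GnGraph n).Adj (.inr x) (.inr y) := by
  simp [GnGraph, GnRel]

theorem connected_induce (hn : 0 < n) {T : Set (GnVert n)} (ha : ∀ i, .inl i ∈ T)
    (hu : ∀ k, ∃ j, .inr (k, j) ∈ T) : ((GnGraph n).induce T).Connected := by
  let a (i : Fin n) : T := ⟨.inl i, ha i⟩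
  have reach_a : ∀ i, ((GnGraph n).induce T).Reachable (a i) (a ⟨0, hn⟩) := by
    rintro ⟨m, hm⟩
    induction m with
    | zero => rfl
    | succ m ih =>
      obtain ⟨j, hj⟩ := hu ⟨m, by omega⟩
      have h₁ : ((GnGraph n).induce T).Adj (a ⟨m + 1, hm⟩) ⟨_, hj⟩ := by simp [a]
      have h₂ : ((GnGraph n).induce T).Adj ⟨_, hj⟩ (a ⟨m, by omega⟩) := by simp [a]
      exact h₁.reachable.trans (h₂.reachable.trans (ih _))
  have reach : ∀ v : T, ((GnGraph n).induce T).Reachable v (a ⟨0, hn⟩) := by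
    rintro ⟨i | ⟨k, j⟩, hv⟩
    · exact reach_a i
    · have hk : (k : ℕ) < n := by omega
      have h : ((GnGraph n).induce T).Adj ⟨_, hv⟩ (a ⟨k, hk⟩) := by simp [a]
      exact h.reachable.trans (reach_a _)
  have : Nonempty T := ⟨a ⟨0, hn⟩⟩
  exact ⟨fun x y => (reach x).trans (reach y).symm⟩

theorem not_connected_induce {T : Set (GnVert n)} (k : Fin (n - 1))
    (hu : ∀ j, .inr (k, j) ∉ T) (hk : .inl ⟨k, by omega⟩ ∈ T)
    (hk' : .inl ⟨k + 1, by omega⟩ ∈ T) :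
    ¬ ((GnGraph n).induce T).Connected := by
  intro hconn
  -- `T` has no vertex `u_{k,j}`, so no edge of `G[T]` crosses between indices `≤ k` and `> k`.
  let side : T → Prop := fun v =>
    Sum.elim (fun i : Fin n => (i : ℕ) ≤ k) (fun m : Fin (n - 1) × Fin 2 => (m.1 : ℕ) ≤ k) v.1
  have hside : ∀ v w, ((GnGraph n).induce T).Adj v w → side v = side w := by
    rintro ⟨i | ⟨m, j⟩, hv⟩ ⟨i' | ⟨m', j'⟩, hw⟩ hadj <;>
      simp only [SimpleGraph.comap_adj, Function.Embedding.subtype_apply, adj_inl_inr_iff,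
        adj_inr_inl_iff, not_adj_inl_inl, not_adj_inr_inr] at hadj
    · have : m' ≠ k := by rintro rfl; exact hu j' hw
      simp only [side, Sum.elim_inl, Sum.elim_inr, eq_iff_iff]
      omega
    · have : m ≠ k := by rintro rfl; exact hu j hv
      simp only [side, Sum.elim_inl, Sum.elim_inr, eq_iff_iff]
      omega
  have := (hconn.preconnected ⟨_, hk⟩ ⟨_, hk'⟩).eq_of_forall_adj_eq side hside
  simp [side] at this

def crdfOf (c : Fin (n - 1) → Fin 2) : GnVert n → ℕ
  | .inl i => if (i : ℕ) % 2 = 1 then 2 else 1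
  | .inr (k, j) => if j = c k then 1 else 0

variable (c : Fin (n - 1) → Fin 2)

theorem crdfOf_inl_ne_zero (i : Fin n) : crdfOf c (.inl i) ≠ 0 := by
  simp only [crdfOf]; split <;> omega

theorem crdfOf_inr_le_one (x : Fin (n - 1) × Fin 2) : crdfOf c (.inr x) ≤ 1 := by
  simp only [crdfOf]; split <;> omega

theorem crdfOf_le_two : ∀ v, crdfOf c v ≤ 2
  | .inl i => by simp only [crdfOf]; split <;> omega
  | .inr x => (crdfOf_inr_le_one c x).trans one_le_two

theorem isRDF_crdfOf : IsRDF (GnGraph n) (crdfOf c) := by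
  refine ⟨crdfOf_le_two c, ?_⟩
  rintro (i | ⟨k, j⟩) h
  · exact absurd h (crdfOf_inl_ne_zero c i)
  · have hk := k.2
    by_cases hodd : (k : ℕ) % 2 = 1
    · exact ⟨.inl ⟨k, by omega⟩, by simp, by simp [crdfOf, hodd]⟩
    · refine ⟨.inl ⟨k + 1, by omega⟩, by simp, ?_⟩
      simp only [crdfOf]
      rw [if_pos (by omega)]

theorem isCRDF_crdfOf (hn : 0 < n) : IsCRDF (GnGraph n) (crdfOf c) := by
  refine ⟨isRDF_crdfOf c, connected_induce hn (fun i => ?_) (fun k => ⟨c k, ?_⟩)⟩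
  · exact (mem_vlevel_one_union_two_iff (crdfOf_le_two c _)).2 (crdfOf_inl_ne_zero c i)
  · simp [Vlevel, crdfOf]

theorem vlevel_crdfOf_two : Vlevel (crdfOf c) 2 = GnA n := by
  ext (i | ⟨k, j⟩)
  · simp only [Vlevel, GnA, crdfOf, Set.mem_ofPred_eq, Sum.inl.injEq, exists_eq_left']
    split <;> simp_all
  · simp only [Vlevel, GnA, crdfOf, Set.mem_ofPred_eq, reduceCtorEq, false_and, exists_false,
      iff_false]
    split <;> omega

theorem crdfOf_le_of_isCRDF {g : GnVert n → ℕ} (hg : IsCRDF (GnGraph n) g)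
    (hle : g ≤ crdfOf c) : crdfOf c ≤ g := by
  obtain ⟨⟨hg2, hdom⟩, hconn⟩ := hg
  have hpos_a : ∀ i, g (.inl i) ≠ 0 := by
    intro i h
    obtain ⟨_ | x, hadj, hx⟩ := hdom _ h
    · exact not_adj_inl_inl _ _ hadj
    · have : g (.inr x) ≤ 1 := (hle _).trans (crdfOf_inr_le_one c x)
      omega
  have htwo_a : ∀ i : Fin n, (i : ℕ) % 2 = 1 → g (.inl i) = 2 := by
    intro i hodd
    obtain ⟨k, hk⟩ : ∃ k : Fin (n - 1), (k : ℕ) + 1 = i := ⟨⟨i - 1, by omega⟩, by simp; omega⟩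
    obtain ⟨j, hj⟩ := exists_ne (c k)
    have h0 : g (.inr (k, j)) = 0 := by simpa [crdfOf, hj] using hle (.inr (k, j))
    obtain ⟨i' | x, hadj, hi'⟩ := hdom _ h0
    · rcases (adj_inr_inl_iff _ _ _).1 hadj with hi | hi
      · have : g (.inl i') ≤ 1 := (hle _).trans (by simp only [crdfOf]; split <;> omega)
        omega
      · rwa [show i' = i from Fin.ext (hi.trans hk)] at hi'
    · exact absurd hadj (not_adj_inr_inr _ _)
  have hpos_u : ∀ k, g (.inr (k, c k)) ≠ 0 := by
    intro k h
    refine not_connected_induce k (fun j => ?_) ?_ ?_ hconn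
    · rw [mem_vlevel_one_union_two_iff (hg2 _), not_not]
      by_cases hj : j = c k
      · rwa [hj]
      · simpa [crdfOf, hj] using hle (.inr (k, j))
    all_goals exact (mem_vlevel_one_union_two_iff (hg2 _)).2 (hpos_a _)
  rintro (i | ⟨k, j⟩)
  · by_cases hodd : (i : ℕ) % 2 = 1
    · simp [crdfOf, hodd, htwo_a i hodd]
    · simpa [crdfOf, hodd, Nat.one_le_iff_ne_zero] using hpos_a i
  · by_cases hj : j = c k
    · subst hj
      simpa [crdfOf, Nat.one_le_iff_ne_zero] using hpos_u k
    · simp [crdfOf, hj]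

theorem minimalWrt_crdfOf (hn : 0 < n) :
    MinimalWrt (IsCRDF (GnGraph n)) (crdfOf c) :=
  ⟨isCRDF_crdfOf c hn, fun _ hg hle => le_antisymm hle (crdfOf_le_of_isCRDF c hg hle)⟩

theorem crdfOf_injective : Function.Injective (crdfOf (n := n)) := by
  intro c c' h
  funext k
  by_contra hne
  simpa [crdfOf, Ne.symm hne] using congrFun h (.inr (k, c' k))

theorem two_pow_le_ncard_CSet (hn : 0 < n) :
    2 ^ (n - 1) ≤ (CSet (IsCRDF (GnGraph n)) (GnA n)).ncard := by
  have hmem : ∀ c, crdfOf c ∈ CSet (IsCRDF (GnGraph n)) (GnA n) := fun c =>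
    ⟨minimalWrt_crdfOf c hn, vlevel_crdfOf_two c⟩
  calc 2 ^ (n - 1) = Nat.card (Fin (n - 1) → Fin 2) := by simp
    _ ≤ (CSet (IsCRDF (GnGraph n)) (GnA n)).ncard := by
      have : Finite (CSet (IsCRDF (GnGraph n)) (GnA n)) :=
        (CSet.finite_of_isRDF (fun _ hf => hf.1) _).to_subtype
      exact Nat.card_le_card_of_injective (fun c => ⟨crdfOf c, hmem c⟩)
        fun c c' h => crdfOf_injective (congrArg Subtype.val h)

end GnGraph

/-- `|C_{CRDF,G_n}[A]| ≥ 2^{n/3}`. -/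
theorem stmt19 (n : ℕ) (hn : 2 ≤ n) :
    (2 : ℝ) ^ ((n : ℝ) / 3) ≤ ((CSet (IsCRDF (GnGraph n)) (GnA n)).ncard : ℝ) :=
  calc (2 : ℝ) ^ ((n : ℝ) / 3) ≤ (2 : ℝ) ^ ((n - 1 : ℕ) : ℝ) := by
        gcongr
        · norm_num
        · rw [Nat.cast_sub (by omega), Nat.cast_one]
          linarith [show (2 : ℝ) ≤ n by exact_mod_cast hn]
    _ = ((2 ^ (n - 1) : ℕ) : ℝ) := by rw [Real.rpow_natCast]; push_cast; rfl
    _ ≤ _ := by exact_mod_cast GnGraph.two_pow_le_ncard_CSet (by omega)
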